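/- arXiv:1302.0602 — 3 statements merged into one kernel-verified Lean document; each statement's English description precedes it below -/
import Mathlib

section
/- Let R be a commutative principal ideal domain with the IP₂ property (every 2×2 matrix over R with determinant 0 is a product of idempotent matrices). Then for every positive integer n, every n×n matrix over R with determinant 0 is a product of idempotent matrices. -/
/-!
Induct on the size `n`: a singular `1 × 1` matrix is `0`, and `n = 2` is the IP₂ property.
For `n ≥ 3`, the primitive part `b` of a nonzero left kernel vector of a singular `A` is a
unimodular row, hence (over a PID) the last row of an invertible matrix `U`; so `A` is similar
to `T = !![M, m; 0, 0]`. If `det M = 0`, then `T = !![1, m; 0, 0] * !![M, 0; 0, 1]` and `M` is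
handled by induction. In general take `(q, t) ∈ ker T` and, using `n ≥ 3`, a unimodular `η ⊥ q`
with `η ⬝ᵥ p = 1`. Then `T = !![1, p; 0, 0] * Z` with `Z = !![M - p wᵀ, m - s p; wᵀ, s]`,
`w = η ᵥ* M`, `s = η ⬝ᵥ m`, and `Z` has the unimodular left kernel vector `(η, 0)`, orthogonal
to its kernel vector `(q, t)`. Conjugating `Z` to `!![M₀, m₀; 0, 0]` by a completion of `(η, 0)`
carries `(q, t)` to some `(ξ, 0)` with `ξ ≠ 0` and `M₀ *ᵥ ξ = 0`, so the first case applies.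
-/

open Matrix

section IdempotentProducts

def idempotentProducts (M : Type*) [Monoid M] : Submonoid M :=
  Submonoid.closure {e | IsIdempotentElem e}

variable {M : Type*} [Monoid M]

theorem IsIdempotentElem.mem_idempotentProducts {e : M} (he : IsIdempotentElem e) :
    e ∈ idempotentProducts M :=
  Submonoid.subset_closure he

theorem map_mem_idempotentProducts {N F : Type*} [Monoid N] [FunLike F M N]
    [MonoidHomClass F M N] (f : F) {x : M} (hx : x ∈ idempotentProducts M) :
    f x ∈ idempotentProducts N :=
  (Submonoid.closure_le (S := (idempotentProducts N).comap f)).mpr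
    (fun _ he => (he.map f).mem_idempotentProducts) hx

theorem units_conj_mem_idempotentProducts_iff (u : Mˣ) {x : M} :
    ↑u * x * ↑u⁻¹ ∈ idempotentProducts M ↔ x ∈ idempotentProducts M := by
  have conj_mem (v : Mˣ) {y : M} (hy : y ∈ idempotentProducts M) :
      ↑v * y * ↑v⁻¹ ∈ idempotentProducts M := by
    simpa [ConjAct.units_smul_def] using
      map_mem_idempotentProducts (MulDistribMulAction.toMonoidHom M (ConjAct.toConjAct v)) hy
  refine ⟨fun h => ?_, conj_mem u⟩
  simpa [mul_assoc] using conj_mem u⁻¹ h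

theorem mem_idempotentProducts_iff {x : M} :
    x ∈ idempotentProducts M ↔ ∃ l : List M, (∀ e ∈ l, e * e = e) ∧ x = l.prod := by
  refine ⟨fun hx => ?_, fun ⟨l, hl, hx⟩ => hx ▸ Submonoid.list_prod_mem _ fun e he => ?_⟩
  · obtain ⟨l, hl, rfl⟩ := Submonoid.exists_list_of_mem_closure hx
    exact ⟨l, hl, rfl⟩
  · exact IsIdempotentElem.mem_idempotentProducts (hl e he)

end IdempotentProducts

section Border

variable {R : Type*} {k : ℕ}

/-- `border M m w s` is the block matrix `!![M, m; wᵀ, s]`. -/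
def border (M : Matrix (Fin k) (Fin k) R) (m w : Fin k → R) (s : R) :
    Matrix (Fin (k + 1)) (Fin (k + 1)) R :=
  Matrix.of (Fin.snoc (fun i => Fin.snoc (M i) (m i)) (Fin.snoc w s))

variable {M M' : Matrix (Fin k) (Fin k) R} {m m' w w' : Fin k → R} {s s' : R}

@[simp] theorem border_castSucc_castSucc (i j : Fin k) :
    border M m w s i.castSucc j.castSucc = M i j := by simp [border]
@[simp] theorem border_castSucc_last (i : Fin k) :
    border M m w s i.castSucc (Fin.last k) = m i := by simp [border]
@[simp] theorem border_last_castSucc (j : Fin k) :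
    border M m w s (Fin.last k) j.castSucc = w j := by simp [border]
@[simp] theorem border_last_last : border M m w s (Fin.last k) (Fin.last k) = s := by
  simp [border]

theorem border_row_last : border M m w s (Fin.last k) = Fin.snoc w s := by
  ext j; simp [border]

variable [CommRing R]

theorem border_mul :
    border M m w s * border M' m' w' s' =
      border (M * M' + vecMulVec m w') (M *ᵥ m' + s' • m) (w ᵥ* M' + s • w')
        (w ⬝ᵥ m' + s * s') := by
  ext i j
  refine Fin.lastCases ?_ (fun i => ?_) i <;> refine Fin.lastCases ?_ (fun j => ?_) j <;>
    simp [Matrix.mul_apply, Fin.sum_univ_castSucc, vecMulVec_apply, mulVec, vecMul, dotProduct,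
      mul_comm]

theorem border_mulVec (x : Fin k → R) (t : R) :
    border M m w s *ᵥ Fin.snoc x t = Fin.snoc (M *ᵥ x + t • m) (w ⬝ᵥ x + s * t) := by
  ext i
  refine Fin.lastCases ?_ (fun i => ?_) i <;>
    simp [mulVec, dotProduct, Fin.sum_univ_castSucc, mul_comm]

theorem snoc_vecMul_border (x : Fin k → R) (t : R) :
    Fin.snoc x t ᵥ* border M m w s = Fin.snoc (x ᵥ* M + t • w) (x ⬝ᵥ m + t * s) := by
  ext j
  refine Fin.lastCases ?_ (fun j => ?_) j <;>
    simp [vecMul, dotProduct, Fin.sum_univ_castSucc, mul_comm]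

theorem border_one_zero_zero_one : border (1 : Matrix (Fin k) (Fin k) R) 0 0 1 = 1 := by
  ext i j
  refine Fin.lastCases ?_ (fun i => ?_) i <;> refine Fin.lastCases ?_ (fun j => ?_) j <;>
    simp [one_apply, (Fin.castSucc_lt_last _).ne, (Fin.castSucc_lt_last _).ne']

theorem exists_eq_border_of_row_last_eq_zero {A : Matrix (Fin (k + 1)) (Fin (k + 1)) R}
    (hA : A (Fin.last k) = 0) : ∃ M m, A = border M m 0 0 := by
  refine ⟨A.submatrix Fin.castSucc Fin.castSucc, fun i => A i.castSucc (Fin.last k), ?_⟩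
  ext i j
  refine Fin.lastCases ?_ (fun i => ?_) i <;> refine Fin.lastCases ?_ (fun j => ?_) j <;>
    simp [hA]

theorem snoc_eq_zero_iff {x : Fin k → R} {t : R} :
    (Fin.snoc x t : Fin (k + 1) → R) = 0 ↔ x = 0 ∧ t = 0 := by
  refine ⟨fun h => ⟨funext fun i => by simpa using congrFun h i.castSucc,
    by simpa using congrFun h (Fin.last k)⟩, ?_⟩
  rintro ⟨rfl, rfl⟩
  exact Fin.snoc_init_self 0

theorem dotProduct_snoc (x y : Fin k → R) (t r : R) :
    Fin.snoc x t ⬝ᵥ Fin.snoc y r = x ⬝ᵥ y + t * r := by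
  simp [dotProduct, Fin.sum_univ_castSucc]

def padHom : Matrix (Fin k) (Fin k) R →* Matrix (Fin (k + 1)) (Fin (k + 1)) R where
  toFun M := border M 0 0 1
  map_one' := border_one_zero_zero_one
  map_mul' M M' := by simp [border_mul]

theorem isIdempotentElem_border_one (m : Fin k → R) :
    IsIdempotentElem (border 1 m 0 0) := by
  simp [IsIdempotentElem, border_mul]

theorem border_one_mul_padHom : border 1 m 0 0 * padHom M = border M m 0 0 := by
  simp [padHom, border_mul]

theorem border_one_mul_border (p : Fin k → R) :
    border 1 p 0 0 * border (M - vecMulVec p w) (m - s • p) w s = border M m 0 0 := by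
  simp [border_mul]

end Border

section Unimodular

variable {R : Type*} [CommRing R] {k : ℕ}

def IsUnimodular {ι : Type*} [Fintype ι] (b : ι → R) : Prop :=
  ∃ c, b ⬝ᵥ c = 1

theorem exists_isUnit_row_last_eq_snoc_single {g β : R} (h : IsCoprime g β) :
    ∃ X : Matrix (Fin (k + 2)) (Fin (k + 2)) R,
      IsUnit X ∧ X (Fin.last (k + 1)) = Fin.snoc (Pi.single (Fin.last k) g) β := by
  obtain ⟨a, c, hac⟩ := h
  let e : Fin k ⊕ Fin 2 ≃ Fin (k + 2) := finSumFinEquiv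
  refine ⟨reindex e e (fromBlocks 1 0 0 !![c, -a; g, β]), ?_, ?_⟩
  · rw [isUnit_iff_isUnit_det, det_reindex_self, det_fromBlocks_zero₂₁, det_fin_two_of,
      det_one, one_mul, show c * β - -a * g = 1 by linear_combination hac]
    exact isUnit_one
  · have h1 : e.symm (Fin.last (k + 1)) = Sum.inr 1 :=
      e.symm_apply_eq.mpr (Fin.ext (by simp [e]))
    have h0 : e.symm (Fin.last k).castSucc = Sum.inr 0 :=
      e.symm_apply_eq.mpr (Fin.ext (by simp [e]))
    have hc (j : Fin k) : e.symm j.castSucc.castSucc = Sum.inl j := e.symm_apply_eq.mpr rfl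
    ext j
    refine Fin.lastCases ?_ (fun j => Fin.lastCases ?_ (fun j => ?_) j) j <;>
      simp [h1, h0, hc, (Fin.castSucc_lt_last _).ne]

section PID

variable [IsDomain R] [IsPrincipalIdealRing R]

theorem exists_eq_smul_isUnimodular {ι : Type*} [Fintype ι] [Nonempty ι] (v : ι → R) :
    ∃ (g : R) (u : ι → R), IsUnimodular u ∧ v = g • u := by
  classical
  by_cases hv : v = 0
  · obtain ⟨i⟩ := ‹Nonempty ι›
    exact ⟨0, Pi.single i 1, ⟨Pi.single i 1, by simp⟩, by simp [hv]⟩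
  set I := Ideal.span (Set.range v)
  set g := Submodule.IsPrincipal.generator I
  have hdvd (i : ι) : ∃ u, v i = g * u := by
    obtain ⟨u, hu⟩ := (Submodule.IsPrincipal.mem_iff_eq_smul_generator I).mp
      (Ideal.subset_span ⟨i, rfl⟩)
    exact ⟨u, hu.trans (mul_comm _ _)⟩
  choose u hu using hdvd
  have hvu : v = g • u := funext hu
  have hg : g ≠ 0 := fun hg => hv (by simp [hvu, hg])
  obtain ⟨c, hc⟩ : ∃ c : ι → R, ∑ i, c i * v i = g :=
    Ideal.mem_span_range_iff_exists_fun.mp (Submodule.IsPrincipal.generator_mem I)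
  refine ⟨g, u, ⟨c, mul_left_cancel₀ hg ?_⟩, hvu⟩
  calc g * (u ⬝ᵥ c) = v ⬝ᵥ c := by rw [hvu, smul_dotProduct, smul_eq_mul]
    _ = g * 1 := by
      rw [mul_one, ← hc, dotProduct]
      exact Finset.sum_congr rfl fun i _ => mul_comm _ _

theorem exists_isUnit_row_last_eq (b : Fin (k + 1) → R) (hb : IsUnimodular b) :
    ∃ C : Matrix (Fin (k + 1)) (Fin (k + 1)) R, IsUnit C ∧ C (Fin.last k) = b := by
  induction k with
  | zero =>
    obtain ⟨c, hc⟩ := hb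
    refine ⟨Matrix.of fun _ => b, ?_, rfl⟩
    rw [isUnit_iff_isUnit_det, det_fin_one]
    exact IsUnit.of_mul_eq_one (c 0) (by simpa [dotProduct] using hc)
  | succ k ih =>
    obtain ⟨g, u, hu, hgu⟩ := exists_eq_smul_isUnimodular (Fin.init b)
    obtain ⟨C, hC, hCu⟩ := ih u hu
    obtain ⟨c, hc⟩ := hb
    have hcop : IsCoprime g (b (Fin.last _)) := by
      refine ⟨u ⬝ᵥ Fin.init c, c (Fin.last _), ?_⟩
      rw [← Fin.snoc_init_self b, ← Fin.snoc_init_self c, dotProduct_snoc, hgu] at hc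
      simpa [smul_dotProduct, mul_comm] using hc
    obtain ⟨X, hX, hXrow⟩ := exists_isUnit_row_last_eq_snoc_single (k := k) hcop
    refine ⟨X * padHom C, hX.mul (hC.map padHom), ?_⟩
    rw [mul_apply_eq_vecMul, hXrow, padHom, MonoidHom.coe_mk, OneHom.coe_mk, snoc_vecMul_border]
    simp [row, hCu, ← hgu]

theorem exists_isUnimodular_dotProduct_eq_zero (q : Fin (k + 2) → R) :
    ∃ η, IsUnimodular η ∧ η ⬝ᵥ q = 0 := by
  obtain ⟨g, u, hu, rfl⟩ := exists_eq_smul_isUnimodular q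
  obtain ⟨C, ⟨U, rfl⟩, hUu⟩ := exists_isUnit_row_last_eq u hu
  set η : Fin (k + 2) → R := (↑U⁻¹ : Matrix _ _ R) *ᵥ (Pi.single 0 1 : Fin (k + 2) → R)
  have hU : (U : Matrix _ _ R) *ᵥ η = Pi.single (0 : Fin (k + 2)) (1 : R) := by
    rw [mulVec_mulVec, Units.mul_inv, one_mulVec]
  refine ⟨η, ⟨U 0, ?_⟩, ?_⟩
  · rw [dotProduct_comm]
    exact (congrFun hU 0).trans (by simp)
  · have hlast : (U : Matrix (Fin (k + 2)) (Fin (k + 2)) R) (Fin.last (k + 1)) ⬝ᵥ η = 0 :=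
      (congrFun hU _).trans (by simp)
    rw [dotProduct_smul, dotProduct_comm, ← hUu, hlast, smul_zero]

end PID

end Unimodular

section PropertyIP

/-- The property IPₙ. -/
def PropertyIP (R : Type*) [CommRing R] (n : ℕ) : Prop :=
  ∀ A : Matrix (Fin n) (Fin n) R, A.det = 0 → A ∈ idempotentProducts (Matrix (Fin n) (Fin n) R)

variable {R : Type*} [CommRing R] {k : ℕ}

theorem border_mem_idempotentProducts_of_det_eq_zero (h : PropertyIP R k)
    {M : Matrix (Fin k) (Fin k) R} (hM : M.det = 0) (m : Fin k → R) :
    border M m 0 0 ∈ idempotentProducts _ := by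
  rw [← border_one_mul_padHom]
  exact mul_mem (isIdempotentElem_border_one m).mem_idempotentProducts
    (map_mem_idempotentProducts padHom (h M hM))

section PID

variable [IsDomain R] [IsPrincipalIdealRing R]

theorem exists_units_conj_eq_border {A : Matrix (Fin (k + 1)) (Fin (k + 1)) R}
    {b : Fin (k + 1) → R} (hb : IsUnimodular b) (hbA : b ᵥ* A = 0) :
    ∃ (U : (Matrix (Fin (k + 1)) (Fin (k + 1)) R)ˣ) (M : Matrix (Fin k) (Fin k) R)
      (m : Fin k → R), (U : Matrix _ _ R) * A * (↑U⁻¹ : Matrix _ _ R) = border M m 0 0 ∧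
        (U : Matrix _ _ R) (Fin.last k) = b := by
  obtain ⟨C, ⟨U, rfl⟩, hUb⟩ := exists_isUnit_row_last_eq b hb
  have hlast : ((U : Matrix (Fin (k + 1)) (Fin (k + 1)) R) * A *
      (↑U⁻¹ : Matrix (Fin (k + 1)) (Fin (k + 1)) R)) (Fin.last k) = 0 := by
    rw [mul_apply_eq_vecMul, mul_apply_eq_vecMul, hUb, hbA, zero_vecMul]
  obtain ⟨M, m, hM⟩ := exists_eq_border_of_row_last_eq_zero hlast
  exact ⟨U, M, m, hM, hUb⟩

theorem mem_idempotentProducts_of_vecMul_eq_zero (h : PropertyIP R k)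
    {Z : Matrix (Fin (k + 1)) (Fin (k + 1)) R} {b z : Fin (k + 1) → R} (hb : IsUnimodular b)
    (hbZ : b ᵥ* Z = 0) (hz : z ≠ 0) (hZz : Z *ᵥ z = 0) (hbz : b ⬝ᵥ z = 0) :
    Z ∈ idempotentProducts _ := by
  obtain ⟨U, M, m, hUZ, hUb⟩ := exists_units_conj_eq_border hb hbZ
  rw [← units_conj_mem_idempotentProducts_iff U, hUZ]
  refine border_mem_idempotentProducts_of_det_eq_zero h ?_ m
  set z' := (U : Matrix (Fin (k + 1)) (Fin (k + 1)) R) *ᵥ z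
  have hz'_last : z' (Fin.last k) = 0 := by
    change (U : Matrix _ _ R) (Fin.last k) ⬝ᵥ z = 0
    rw [hUb, hbz]
  have hz' : z' = Fin.snoc (Fin.init z') 0 := by rw [← hz'_last, Fin.snoc_init_self]
  have hξ : Fin.init z' ≠ 0 := by
    intro hξ
    rw [hξ, snoc_eq_zero_iff.mpr ⟨rfl, rfl⟩] at hz'
    apply hz
    simpa [z', mulVec_mulVec] using
      congrArg ((↑U⁻¹ : Matrix (Fin (k + 1)) (Fin (k + 1)) R) *ᵥ ·) hz'
  have hMξ : M *ᵥ Fin.init z' = 0 := by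
    have : border M m 0 0 *ᵥ z' = 0 := by
      rw [← hUZ, mulVec_mulVec, Matrix.mul_assoc, Units.inv_mul, Matrix.mul_one,
        ← mulVec_mulVec, hZz, mulVec_zero]
    rw [hz', border_mulVec, snoc_eq_zero_iff] at this
    simpa using this.1
  exact exists_mulVec_eq_zero_iff.mp ⟨_, hξ, hMξ⟩

theorem border_mem_idempotentProducts (h : PropertyIP R (k + 2))
    (M : Matrix (Fin (k + 2)) (Fin (k + 2)) R) (m : Fin (k + 2) → R) :
    border M m 0 0 ∈ idempotentProducts _ := by
  obtain ⟨z, hz, hTz⟩ := exists_mulVec_eq_zero_iff.mpr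
    (det_eq_zero_of_row_eq_zero (A := border M m 0 0) (Fin.last _) fun j =>
      congrFun (border_row_last.trans (snoc_eq_zero_iff.mpr ⟨rfl, rfl⟩)) j)
  set q := Fin.init z
  set t := z (Fin.last _)
  have hzqt : z = Fin.snoc q t := (Fin.snoc_init_self z).symm
  have hMq : M *ᵥ q + t • m = 0 := by
    rw [hzqt, border_mulVec, snoc_eq_zero_iff] at hTz
    exact hTz.1
  obtain ⟨η, ⟨p, hηp⟩, hηq⟩ := exists_isUnimodular_dotProduct_eq_zero q
  set w := η ᵥ* M
  set s := η ⬝ᵥ m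
  have hwq : w ⬝ᵥ q + s * t = 0 := by
    rw [← dotProduct_mulVec, mul_comm, ← smul_eq_mul, ← dotProduct_smul, ← dotProduct_add, hMq,
      dotProduct_zero]
  rw [← border_one_mul_border p (w := w) (s := s)]
  refine mul_mem (isIdempotentElem_border_one p).mem_idempotentProducts
    (mem_idempotentProducts_of_vecMul_eq_zero h (b := Fin.snoc η 0) (z := z)
      ⟨Fin.snoc p 0, by simp [dotProduct_snoc, hηp]⟩ ?_ hz ?_ ?_)
  · rw [snoc_vecMul_border, snoc_eq_zero_iff, vecMul_sub, vecMul_vecMulVec, dotProduct_sub,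
      dotProduct_smul, hηp]
    simp [w, s]
  · rw [hzqt, border_mulVec, snoc_eq_zero_iff, sub_mulVec, vecMulVec_mulVec, op_smul_eq_smul]
    refine ⟨?_, hwq⟩
    calc M *ᵥ q - (w ⬝ᵥ q) • p + t • (m - s • p)
          = (M *ᵥ q + t • m) - (w ⬝ᵥ q + s * t) • p := by module
      _ = 0 := by rw [hMq, hwq, zero_smul, sub_zero]
  · rw [hzqt, dotProduct_snoc, hηq, zero_mul, add_zero]

theorem PropertyIP.succ (h : PropertyIP R (k + 2)) : PropertyIP R (k + 3) := by
  intro A hA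
  obtain ⟨v, hv, hvA⟩ := exists_vecMul_eq_zero_iff.mpr hA
  obtain ⟨g, b, hb, rfl⟩ := exists_eq_smul_isUnimodular v
  have hbA : b ᵥ* A = 0 := by
    rw [smul_vecMul] at hvA
    exact (smul_eq_zero.mp hvA).resolve_left (by rintro rfl; simp at hv)
  obtain ⟨U, M, m, hUA, -⟩ := exists_units_conj_eq_border hb hbA
  rw [← units_conj_mem_idempotentProducts_iff U, hUA]
  exact border_mem_idempotentProducts h M m

end PID

theorem propertyIP_one : PropertyIP R 1 := by
  intro A hA
  have : A = 0 := by
    ext i j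
    rw [Subsingleton.elim i 0, Subsingleton.elim j 0, ← det_fin_one A, hA, Matrix.zero_apply]
  exact this ▸ IsIdempotentElem.zero.mem_idempotentProducts

theorem propertyIP_of_propertyIP_two [IsDomain R] [IsPrincipalIdealRing R]
    (h2 : PropertyIP R 2) : ∀ n, PropertyIP R (n + 1)
  | 0 => propertyIP_one
  | 1 => h2
  | k + 2 => (propertyIP_of_propertyIP_two h2 (k + 1)).succ

end PropertyIP

/-- A commutative principal ideal domain with the IP₂ property has the IP
property: every singular square matrix is a product of idempotent matrices. -/
theorem IP_of_pid_IP2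
    (R : Type*) [CommRing R] [IsDomain R] [IsPrincipalIdealRing R]
    (hIP2 : ∀ A : Matrix (Fin 2) (Fin 2) R, A.det = 0 →
      ∃ l : List (Matrix (Fin 2) (Fin 2) R), (∀ E ∈ l, E * E = E) ∧ A = l.prod) :
    ∀ (n : ℕ) (A : Matrix (Fin (n + 1)) (Fin (n + 1)) R), A.det = 0 →
      ∃ l : List (Matrix (Fin (n + 1)) (Fin (n + 1)) R),
        (∀ E ∈ l, E * E = E) ∧ A = l.prod := fun n A hA =>
  mem_idempotentProducts_iff.mp <| propertyIP_of_propertyIP_two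
    (fun A hA => mem_idempotentProducts_iff.mpr (hIP2 A hA)) n A hA
end

section
/- Let R be a commutative Bézout domain with the IP₂ property (every 2×2 matrix over R with determinant 0 is a product of idempotent matrices). Then every invertible 2×2 matrix over R is a product of elementary matrices and diagonal matrices with unit diagonal entries; i.e., every element of GL₂(R) lies in the subgroup of GL₂(R) generated by the elementary matrices I + c·eᵢⱼ (c ∈ R, i ≠ j) and the diagonal matrices diag(u, v) with u, v units of R. -/
/-!
Let `M ∈ GL₂(R)` have first row `v`. The singular matrix with rows `v` and `0` is a product
`E₁ ⋯ Eₖ` of idempotents, so `v = e₁ E₁ ⋯ Eₖ`, and every partial product `e₁ E₁ ⋯ Eᵢ` is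
unimodular because `v` is. Over a Bézout domain an idempotent other than `0` and `1` is a rank-one
matrix `p wᵀ` with `w ⬝ p = 1`, so `x E = (x ⬝ p) w` with `x ⬝ p` a unit. By induction on `i`,
each partial product is the first row of some `g ∈ GE₂(R)`: if `x` is the first row of `g`, then
`w g⁻¹` pairs to `1` with `g p`, whose first entry `x ⬝ p` is a unit, and such a row is reached
from `e₁` by two transvections and a diagonal matrix. Finally, if `M` and `g ∈ GE₂(R)` share their
first row, then `M g⁻¹` is lower triangular with unit diagonal, hence in `GE₂(R)`.
-/

open Matrix

section

variable {R : Type*} [CommRing R]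

theorem IsBezout.exists_eq_mul_isCoprime [IsDomain R] [IsBezout R] (a b : R) :
    ∃ d r s : R, a = d * r ∧ b = d * s ∧ IsCoprime r s := by
  classical
  let := IsBezout.toGCDDomain R
  obtain ⟨r, s, ha, hb, hu⟩ := extract_gcd a b
  exact ⟨_, r, s, ha, hb, (gcd_isUnit_iff r s).mp hu⟩

theorem Matrix.exists_eq_vecMulVec_of_det_eq_zero [IsDomain R] [IsBezout R]
    {A : Matrix (Fin 2) (Fin 2) R} (hA : A.det = 0) : ∃ p w : Fin 2 → R, A = vecMulVec p w := by
  obtain ⟨d, r, s, h00, h01, x, y, hxy⟩ := IsBezout.exists_eq_mul_isCoprime (A 0 0) (A 0 1)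
  rw [det_fin_two] at hA
  by_cases hd : d = 0
  · subst hd
    refine ⟨![0, 1], A 1, ?_⟩
    ext i j; fin_cases i <;> fin_cases j <;> simp [vecMulVec_apply, h00, h01]
  · have hrs : r * A 1 1 = s * A 1 0 :=
      mul_left_cancel₀ hd (by linear_combination hA - A 1 1 * h00 + A 1 0 * h01)
    refine ⟨![d, x * A 1 0 + y * A 1 1], ![r, s], ?_⟩
    ext i j; fin_cases i <;> fin_cases j <;> simp [vecMulVec_apply]
    · exact h00
    · exact h01
    · linear_combination (-A 1 0) * hxy - y * hrs
    · linear_combination (-A 1 1) * hxy + x * hrs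

theorem Matrix.mul_self_fin_two (E : Matrix (Fin 2) (Fin 2) R) :
    E * E = E.trace • E - E.det • 1 := by
  ext i j; fin_cases i <;> fin_cases j <;> simp [mul_apply, trace_fin_two, det_fin_two] <;> ring

theorem Matrix.trace_eq_one_and_det_eq_zero_of_isIdempotentElem [IsDomain R]
    {E : Matrix (Fin 2) (Fin 2) R} (hE : IsIdempotentElem E) (h0 : E ≠ 0) (h1 : E ≠ 1) :
    E.trace = 1 ∧ E.det = 0 := by
  have hdet : E.det = 0 := by
    refine (IsIdempotentElem.iff_eq_zero_or_one.mp (hE.map detMonoidHom)).resolve_right fun h ↦ ?_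
    exact h1 ((IsIdempotentElem.iff_eq_one_of_isUnit
      ((isUnit_iff_isUnit_det E).mpr (by simp_all))).mp hE)
  refine ⟨?_, hdet⟩
  have : (E.trace - 1) • E = 0 := by
    rw [sub_smul, one_smul, sub_eq_zero]
    simpa [hdet] using (hE.eq.symm.trans E.mul_self_fin_two).symm
  exact sub_eq_zero.mp ((smul_eq_zero.mp this).resolve_right h0)

namespace Matrix

variable {n : Type*} [Fintype n] [DecidableEq n]

def transvectionUnit {i j : n} (hij : i ≠ j) (c : R) : (Matrix n n R)ˣ where
  val := transvection i j c
  inv := transvection i j (-c)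
  val_inv := by simp [transvection_mul_transvection_same (h := hij)]
  inv_val := by simp [transvection_mul_transvection_same (h := hij)]

def diagonalUnit (u : n → Rˣ) : (Matrix n n R)ˣ where
  val := diagonal fun i ↦ u i
  inv := diagonal fun i ↦ ↑(u i)⁻¹
  val_inv := by simp [diagonal_mul_diagonal]
  inv_val := by simp [diagonal_mul_diagonal]

end Matrix

variable (R) in
def GE2 : Subgroup (Matrix (Fin 2) (Fin 2) R)ˣ :=
  Subgroup.closure
    {N : (Matrix (Fin 2) (Fin 2) R)ˣ |
      (∃ (i j : Fin 2) (c : R), i ≠ j ∧ N.val = 1 + Matrix.single i j c) ∨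
      (∃ u v : Rˣ, N.val = Matrix.diagonal ![(u : R), (v : R)])}

namespace GE2

theorem transvectionUnit_mem {i j : Fin 2} (hij : i ≠ j) (c : R) :
    transvectionUnit hij c ∈ GE2 R :=
  Subgroup.subset_closure (Or.inl ⟨i, j, c, hij, rfl⟩)

theorem diagonalUnit_mem (u : Fin 2 → Rˣ) : diagonalUnit u ∈ GE2 R :=
  Subgroup.subset_closure <|
    Or.inr ⟨u 0, u 1, congrArg diagonal (funext fun i ↦ by fin_cases i <;> rfl)⟩

theorem mem_of_row_zero_eq {L : (Matrix (Fin 2) (Fin 2) R)ˣ}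
    (hL : (L : Matrix (Fin 2) (Fin 2) R) 0 = (1 : Matrix (Fin 2) (Fin 2) R) 0) : L ∈ GE2 R := by
  have h00 : L.val 0 0 = 1 := congrFun hL 0
  have h01 : L.val 0 1 = 0 := congrFun hL 1
  obtain ⟨δ, hδ⟩ : IsUnit (L.val 1 1) := by
    simpa [det_fin_two, h00, h01] using (isUnit_iff_isUnit_det _).mp L.isUnit
  have : L = transvectionUnit (Fin.zero_lt_one.ne') (L.val 1 0) * diagonalUnit ![1, δ] := by
    ext i j
    fin_cases i <;> fin_cases j <;>
      simp [transvectionUnit, diagonalUnit, transvection, h00, h01, hδ]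
  rw [this]
  exact mul_mem (transvectionUnit_mem _ _) (diagonalUnit_mem _)

variable (R) in
def firstRows : Set (Fin 2 → R) := {v | ∃ g ∈ GE2 R, (g : Matrix (Fin 2) (Fin 2) R) 0 = v}

theorem one_row_zero_mem_firstRows : (1 : Matrix (Fin 2) (Fin 2) R) 0 ∈ firstRows R :=
  ⟨1, one_mem _, rfl⟩

theorem vecMul_mem_firstRows {v : Fin 2 → R} (hv : v ∈ firstRows R)
    {g : (Matrix (Fin 2) (Fin 2) R)ˣ} (hg : g ∈ GE2 R) : v ᵥ* g.val ∈ firstRows R := by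
  obtain ⟨h, hh, rfl⟩ := hv
  exact ⟨h * g, mul_mem hh hg, rfl⟩

theorem mem_of_row_zero_mem_firstRows {M : (Matrix (Fin 2) (Fin 2) R)ˣ}
    (hM : M.val 0 ∈ firstRows R) : M ∈ GE2 R := by
  obtain ⟨g, hg, hgM⟩ := hM
  have : M * g⁻¹ ∈ GE2 R := mem_of_row_zero_eq <| by
    rw [Units.val_mul, mul_apply_eq_vecMul, ← hgM, ← mul_apply_eq_vecMul, ← Units.val_mul,
      mul_inv_cancel, Units.val_one]
  simpa using mul_mem this hg

theorem smul_mem_firstRows {c : R} (hc : IsUnit c) {v : Fin 2 → R} (hv : v ∈ firstRows R) :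
    c • v ∈ firstRows R := by
  obtain ⟨u, rfl⟩ := hc
  convert vecMul_mem_firstRows hv (diagonalUnit_mem fun _ ↦ u) using 1
  ext i
  simp [diagonalUnit, vecMul_diagonal, mul_comm]

/- If `u = v 0 + v 1 * c`, then `(u, v 1)` is the first row of `diag(u, 1) * E₀₁(u⁻¹ * v 1)`,
and `E₁₀(-c)` turns it into `v`. -/
theorem mem_firstRows_of_isUnit_add_mul {v : Fin 2 → R} {c : R} (h : IsUnit (v 0 + v 1 * c)) :
    v ∈ firstRows R := by
  obtain ⟨u, hu⟩ := h
  refine ⟨diagonalUnit ![u, 1] * transvectionUnit Fin.zero_ne_one (↑u⁻¹ * v 1) *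
    transvectionUnit Fin.zero_lt_one.ne' (-c), mul_mem (mul_mem (diagonalUnit_mem _)
    (transvectionUnit_mem _ _)) (transvectionUnit_mem _ _), ?_⟩
  ext j
  fin_cases j <;>
    simp [diagonalUnit, transvectionUnit, transvection, mul_apply, Fin.sum_univ_two]
  linear_combination hu

theorem mem_firstRows_of_dotProduct_eq_one {w q : Fin 2 → R} (h : w ⬝ᵥ q = 1)
    (hq : IsUnit (q 0)) : w ∈ firstRows R := by
  obtain ⟨u, hu⟩ := hq
  refine mem_firstRows_of_isUnit_add_mul (c := q 1 * ↑u⁻¹) ⟨u⁻¹, ?_⟩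
  rw [dotProduct, Fin.sum_univ_two, ← hu] at h
  linear_combination (-↑u⁻¹ : R) * h + w 0 * u.mul_inv

theorem mem_firstRows_of_dotProduct_eq_one_of_isUnit {v w p : Fin 2 → R} (hv : v ∈ firstRows R)
    (hwp : w ⬝ᵥ p = 1) (hvp : IsUnit (v ⬝ᵥ p)) : w ∈ firstRows R := by
  obtain ⟨g, hg, rfl⟩ := hv
  have : w ᵥ* ↑g⁻¹ ∈ firstRows R := by
    refine mem_firstRows_of_dotProduct_eq_one (q := g.val *ᵥ p) ?_ hvp
    rw [← dotProduct_mulVec, mulVec_mulVec, ← Units.val_mul, inv_mul_cancel, Units.val_one,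
      one_mulVec, hwp]
  simpa [vecMul_vecMul] using vecMul_mem_firstRows this hg

theorem vecMul_mem_firstRows_of_isIdempotentElem [IsDomain R] [IsBezout R] {v : Fin 2 → R}
    (hv : v ∈ firstRows R) {E : Matrix (Fin 2) (Fin 2) R} (hE : IsIdempotentElem E)
    {x : Fin 2 → R} (hx : v ᵥ* E ⬝ᵥ x = 1) : v ᵥ* E ∈ firstRows R := by
  by_cases h0 : E = 0
  · simp [h0] at hx
  by_cases h1 : E = 1
  · simpa [h1] using hv
  obtain ⟨htr, hdet⟩ := trace_eq_one_and_det_eq_zero_of_isIdempotentElem hE h0 h1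
  obtain ⟨p, w, rfl⟩ := exists_eq_vecMulVec_of_det_eq_zero hdet
  rw [vecMul_vecMulVec] at hx ⊢
  rw [trace_vecMulVec, dotProduct_comm] at htr
  have hvp : IsUnit (v ⬝ᵥ p) := .of_mul_eq_one (w ⬝ᵥ x) (by rwa [smul_dotProduct] at hx)
  exact smul_mem_firstRows hvp (mem_firstRows_of_dotProduct_eq_one_of_isUnit hv htr hvp)

theorem vecMul_list_prod_mem_firstRows [IsDomain R] [IsBezout R]
    {l : List (Matrix (Fin 2) (Fin 2) R)} (hl : ∀ E ∈ l, IsIdempotentElem E)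
    {v : Fin 2 → R} (hv : v ∈ firstRows R) {x : Fin 2 → R} (hx : v ᵥ* l.prod ⬝ᵥ x = 1) :
    v ᵥ* l.prod ∈ firstRows R := by
  induction l generalizing v with
  | nil => simpa using hv
  | cons E l ih =>
    rw [List.prod_cons, ← vecMul_vecMul] at hx ⊢
    have hvE : v ᵥ* E ∈ firstRows R := vecMul_mem_firstRows_of_isIdempotentElem hv
      (hl E List.mem_cons_self) (x := l.prod *ᵥ x) (by rwa [dotProduct_mulVec])
    exact ih (fun F hF ↦ hl F (List.mem_cons_of_mem E hF)) hvE hx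

end GE2

end

/-- A commutative Bézout domain with the IP₂ property has the GE₂ property:
every invertible `2 × 2` matrix lies in the subgroup generated by elementary
matrices and diagonal matrices with unit diagonal entries. -/
theorem GE2_of_bezout_IP2
    (R : Type*) [CommRing R] [IsDomain R] [IsBezout R]
    (hIP2 : ∀ A : Matrix (Fin 2) (Fin 2) R, A.det = 0 →
      ∃ l : List (Matrix (Fin 2) (Fin 2) R), (∀ E ∈ l, E * E = E) ∧ A = l.prod) :
    ∀ M : (Matrix (Fin 2) (Fin 2) R)ˣ,
      M ∈ Subgroup.closure
        {N : (Matrix (Fin 2) (Fin 2) R)ˣ |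
          (∃ (i j : Fin 2) (c : R), i ≠ j ∧
            N.val = 1 + Matrix.single i j c) ∨
          (∃ u v : Rˣ,
            N.val = Matrix.diagonal ![(u : R), (v : R)])} := by
  intro M
  refine GE2.mem_of_row_zero_mem_firstRows (R := R) ?_
  have hunimod : M.val 0 ⬝ᵥ (fun k ↦ M⁻¹.val k 0) = 1 := by
    rw [← mul_apply', ← Units.val_mul, mul_inv_cancel, Units.val_one, one_apply_eq]
  obtain ⟨l, hl, hA⟩ := hIP2 (of ![M.val 0, 0]) (by simp [det_fin_two])
  have hrow : (1 : Matrix (Fin 2) (Fin 2) R) 0 ᵥ* l.prod = M.val 0 := by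
    rw [← mul_apply_eq_vecMul, one_mul, ← hA]
    rfl
  rw [← hrow] at hunimod ⊢
  exact GE2.vecMul_list_prod_mem_firstRows hl GE2.one_row_zero_mem_firstRows hunimod
end

section
/- Let R be a commutative Bézout domain that has the IP₂ property (every 2×2 matrix with determinant 0 is a product of idempotent matrices) and the GE₂ property (every invertible 2×2 matrix is a product of elementary matrices and diagonal matrices with unit diagonal entries). Then for every positive integer n, every n×n matrix over R with determinant 0 is a product of idempotent matrices. -/
/-!
Induction on the size, the `2 × 2` case being the hypothesis. Over a Bézout domain every vector
is a multiple of a column of an invertible matrix. Applied to a kernel vector, this conjugates a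
singular `A` to a matrix with zero last column; applied to the first coordinates of a left kernel
vector, a further conjugation by `diag(P, 1)` yields a nonzero left kernel vector `w` with
`w 0 = 0`. When the last column of `A` vanishes, `A = (A σ) X` with `X` idempotent, where `σ`
swaps the first and last coordinates; as `A σ` is conjugate to `σ A`, it suffices to treat `σ A`,
whose left kernel vector `w σ` vanishes at the last coordinate. Finally, a matrix with zero last
column is `diag(B, 1) X'` with `X'` idempotent and `B` its top-left block, and `B` is singular
because `w σ` restricts to a left kernel vector of `B`.
-/

open Matrix

theorem isConj_mul_mul_of_mul_eq_one {M : Type*} [Monoid M] {u v : M} (huv : u * v = 1)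
    (hvu : v * u = 1) (x : M) : IsConj x (u * x * v) :=
  ⟨⟨u, v, huv, hvu⟩, by simp [SemiconjBy, mul_assoc, hvu]⟩

namespace idempotentProducts

variable {M N F : Type*} [Monoid M] [Monoid N] [FunLike F M N] [MonoidHomClass F M N]

theorem mem_iff_exists_list {x : M} :
    x ∈ idempotentProducts M ↔ ∃ l : List M, (∀ e ∈ l, e * e = e) ∧ x = l.prod := by
  refine ⟨fun hx => ?_, ?_⟩
  · obtain ⟨l, hl, rfl⟩ := Submonoid.exists_list_of_mem_closure hx
    exact ⟨l, hl, rfl⟩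
  · rintro ⟨l, hl, rfl⟩
    exact Submonoid.list_prod_mem _ fun e he => Submonoid.subset_closure (hl e he)

theorem idempotent_mem {e : M} (he : IsIdempotentElem e) : e ∈ idempotentProducts M :=
  Submonoid.subset_closure he

theorem map_mem (f : F) {x : M} (hx : x ∈ idempotentProducts M) :
    f x ∈ idempotentProducts N := by
  induction hx using Submonoid.closure_induction with
  | mem e he => exact idempotent_mem (he.map f)
  | one => simp [(idempotentProducts N).one_mem]
  | mul x y _ _ hx hy => simpa using (idempotentProducts N).mul_mem hx hy

theorem mem_of_isConj {x y : M} (h : IsConj x y) (hx : x ∈ idempotentProducts M) :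
    y ∈ idempotentProducts M := by
  obtain ⟨c, hc⟩ := h
  have hy : y = ↑c * x * ↑c⁻¹ := by rw [hc.eq, mul_assoc, Units.mul_inv, mul_one]
  simpa [hy, ConjAct.units_smul_def] using
    map_mem (MulDistribMulAction.toMonoidHom M (ConjAct.toConjAct c)) hx

end idempotentProducts

namespace Matrix

variable {R : Type*} [CommRing R]

theorem det_updateCol_smul_col {n : Type*} [Fintype n] [DecidableEq n] (P : Matrix n n R)
    (j : n) (c : R) : (P.updateCol j (c • P.col j)).det = c * P.det := by
  rw [det_updateCol_smul, col_apply', updateCol_eq_self]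

/-- The block matrix `[[a, -b, 0], [c • P.col 0, d • P.col 0, (columns 1.. of P)]]`. -/
def extendCol {m : ℕ} (a b c d : R) (P : Matrix (Fin (m + 1)) (Fin (m + 1)) R) :
    Matrix (Fin (m + 2)) (Fin (m + 2)) R :=
  of fun p q => Fin.cases (Fin.cases a (fun q' => if q' = 0 then -b else 0) q)
    (fun p' => Fin.cases (c * P p' 0) (P.updateCol 0 (d • P.col 0) p') q) p

theorem det_extendCol {m : ℕ} (a b c d : R) (P : Matrix (Fin (m + 1)) (Fin (m + 1)) R) :
    (extendCol a b c d P).det = (a * d + b * c) * P.det := by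
  have h0 : (extendCol a b c d P).submatrix Fin.succ (Fin.succAbove 0) =
      P.updateCol 0 (d • P.col 0) := by
    ext p q; simp [extendCol]
  have h1 : (extendCol a b c d P).submatrix Fin.succ (Fin.succAbove 1) =
      P.updateCol 0 (c • P.col 0) := by
    ext p q
    cases q using Fin.cases <;> simp [extendCol]
  have h00 : extendCol a b c d P 0 0 = a := rfl
  have h01 : extendCol a b c d P 0 1 = -b := rfl
  -- Laplace expansion along row 0, whose only nonzero entries are `a` and `-b`.
  rw [det_succ_row_zero, Fin.sum_univ_succ, Fin.sum_univ_succ, Fin.succ_zero_eq_one, h0, h1,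
    det_updateCol_smul_col, det_updateCol_smul_col, Finset.sum_eq_zero]
  · simp only [h00, h01, Fin.val_zero, Fin.val_one, pow_zero, pow_one]; ring
  · intro i _
    simp [extendCol]

section BlockDiagOne

variable {k : ℕ}

def blockDiagOne (B : Matrix (Fin k) (Fin k) R) : Matrix (Fin (k + 1)) (Fin (k + 1)) R :=
  of fun i j => Fin.lastCases (Fin.lastCases 1 (fun _ => 0) j)
    (fun i' => Fin.lastCases 0 (fun j' => B i' j') j) i

@[simp] theorem blockDiagOne_last_last (B : Matrix (Fin k) (Fin k) R) :
    blockDiagOne B (Fin.last k) (Fin.last k) = 1 := by simp [blockDiagOne]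

@[simp] theorem blockDiagOne_last_castSucc (B : Matrix (Fin k) (Fin k) R) (j : Fin k) :
    blockDiagOne B (Fin.last k) j.castSucc = 0 := by simp [blockDiagOne]

@[simp] theorem blockDiagOne_castSucc_last (B : Matrix (Fin k) (Fin k) R) (i : Fin k) :
    blockDiagOne B i.castSucc (Fin.last k) = 0 := by simp [blockDiagOne]

@[simp] theorem blockDiagOne_castSucc_castSucc (B : Matrix (Fin k) (Fin k) R) (i j : Fin k) :
    blockDiagOne B i.castSucc j.castSucc = B i j := by simp [blockDiagOne]

def blockDiagOneHom : Matrix (Fin k) (Fin k) R →* Matrix (Fin (k + 1)) (Fin (k + 1)) R where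
  toFun := blockDiagOne
  map_one' := by
    ext i j
    induction i using Fin.lastCases <;> induction j using Fin.lastCases <;>
      simp [one_apply, Fin.castSucc_ne_last, (Fin.castSucc_ne_last _).symm]
  map_mul' B C := by
    ext i j
    induction i using Fin.lastCases <;> induction j using Fin.lastCases <;>
      simp [mul_apply, Fin.sum_univ_castSucc]

theorem blockDiagOne_mul (B C : Matrix (Fin k) (Fin k) R) :
    blockDiagOne B * blockDiagOne C = blockDiagOne (B * C) :=
  (blockDiagOneHom.map_mul B C).symm

theorem blockDiagOne_one : blockDiagOne (1 : Matrix (Fin k) (Fin k) R) = 1 :=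
  blockDiagOneHom.map_one

theorem col_blockDiagOne_last (B : Matrix (Fin k) (Fin k) R) :
    (blockDiagOne B).col (Fin.last k) = Pi.single (Fin.last k) 1 := by
  ext i
  induction i using Fin.lastCases <;> simp [Fin.castSucc_ne_last]

theorem vecMul_blockDiagOne_castSucc (w : Fin (k + 1) → R) (B : Matrix (Fin k) (Fin k) R)
    (j : Fin k) : (w ᵥ* blockDiagOne B) j.castSucc = ((w ∘ Fin.castSucc) ᵥ* B) j := by
  simp [vecMul, dotProduct, Fin.sum_univ_castSucc]

end BlockDiagOne

section Factorizations

variable {ι : Type*} [Fintype ι] [DecidableEq ι]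

theorem isIdempotentElem_one_updateRow {l : ι} {r : ι → R} (hr : r l = 0) :
    IsIdempotentElem ((1 : Matrix ι ι R).updateRow l r) := by
  have hrX : r ᵥ* (1 : Matrix ι ι R).updateRow l r = r := by
    ext q
    rw [vecMul, dotProduct, Fintype.sum_eq_single q]
    · by_cases hq : q = l <;> simp [updateRow_apply, hq, hr]
    · intro x hx
      by_cases h : x = l <;> simp [updateRow_apply, h, hx, hr]
  rw [IsIdempotentElem, updateRow_mul, one_mul, hrX, updateRow_idem]

theorem submatrix_swap_mul_one_updateRow {A : Matrix ι ι R} {j l : ι} (hjl : j ≠ l)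
    (hA : A.col l = 0) :
    A.submatrix id (Equiv.swap j l) * (1 : Matrix ι ι R).updateRow l (Pi.single j 1) = A := by
  have hA : ∀ i, A i l = 0 := fun i => congrFun hA i
  ext p q
  rcases eq_or_ne q l with rfl | hql
  · simp [mul_apply, updateRow_apply, one_apply, Finset.sum_ite, hjl.symm, hA]
  rcases eq_or_ne q j with rfl | hqj
  · simp [mul_apply, updateRow_apply, one_apply, Finset.sum_ite, Finset.filter_eq', hA]
  · simp [mul_apply, updateRow_apply, one_apply, Finset.sum_ite, hql, hqj,
      Equiv.swap_apply_of_ne_of_ne]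

theorem mem_idempotentProducts_of_submatrix_swap {A : Matrix ι ι R} {j l : ι} (hjl : j ≠ l)
    (hA : A.col l = 0) (h : A.submatrix (Equiv.swap j l) id ∈ idempotentProducts _) :
    A ∈ idempotentProducts _ := by
  have hσ := idempotentProducts.map_mem (reindexAlgEquiv R R (Equiv.swap j l)) h
  have hσσ : ⇑(Equiv.swap j l) ∘ ⇑(Equiv.swap j l) = id :=
    funext (Equiv.swap_apply_self j l)
  simp only [coe_reindexAlgEquiv, reindex_apply, Equiv.symm_swap, submatrix_submatrix, hσσ,
    Function.id_comp] at hσ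
  rw [← submatrix_swap_mul_one_updateRow hjl hA]
  exact mul_mem hσ (idempotentProducts.idempotent_mem
    (isIdempotentElem_one_updateRow (Pi.single_eq_of_ne hjl.symm 1)))

end Factorizations

end Matrix

namespace IsBezout

variable {R : Type*} [CommRing R] [IsDomain R] [IsBezout R]

theorem exists_eq_smul_dotProduct_eq_one {ι : Type*} [Fintype ι] [Nonempty ι] (v : ι → R) :
    ∃ (d : R) (z y : ι → R), v = d • z ∧ y ⬝ᵥ z = 1 := by
  classical
  obtain ⟨d, hd⟩ := IsBezout.isPrincipal_of_FG _ (Submodule.fg_span (Set.finite_range v))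
  have hspan : Ideal.span (Set.range v) = Ideal.span {d} := hd
  have hdvd : ∀ i, d ∣ v i := fun i =>
    Ideal.mem_span_singleton.mp (hspan ▸ Ideal.subset_span ⟨i, rfl⟩)
  choose z hz using hdvd
  obtain ⟨y, hy⟩ := (Submodule.mem_span_range_iff_exists_fun R).mp
    (hspan ▸ Ideal.mem_span_singleton_self d : d ∈ Ideal.span (Set.range v))
  rcases eq_or_ne d 0 with rfl | hd0
  · obtain ⟨i⟩ := ‹Nonempty ι›
    exact ⟨0, Pi.single i 1, Pi.single i 1, funext fun j => by simp [hz j], by simp⟩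
  refine ⟨d, z, y, funext hz, mul_left_cancel₀ hd0 ?_⟩
  calc d * (y ⬝ᵥ z) = ∑ i, y i • v i := by
        simp [dotProduct, Finset.mul_sum, hz, mul_left_comm]
    _ = d * 1 := by rw [hy, mul_one]

theorem exists_isUnit_det_eq_smul_col_zero :
    ∀ {m : ℕ} (v : Fin (m + 1) → R),
      ∃ (g : R) (P : Matrix (Fin (m + 1)) (Fin (m + 1)) R), IsUnit P.det ∧ v = g • P.col 0
  | 0, v => ⟨v 0, 1, by simp, funext fun i => by simp [Fin.fin_one_eq_zero i]⟩
  | m + 1, v => by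
    obtain ⟨g, P, hP, hv⟩ := exists_isUnit_det_eq_smul_col_zero (Fin.tail v)
    obtain ⟨d, z, y, hz, hyz⟩ := exists_eq_smul_dotProduct_eq_one ![v 0, g]
    refine ⟨d, extendCol (z 0) (y 1) (z 1) (y 0) P, ?_, funext fun p => ?_⟩
    · have hyz' : z 0 * y 0 + y 1 * z 1 = 1 := by
        simpa [dotProduct, Fin.sum_univ_two, mul_comm] using hyz
      rwa [det_extendCol, hyz', one_mul]
    · have h0 := congrFun hz 0
      have h1 := congrFun hz 1
      simp only [cons_val_zero, cons_val_one, Pi.smul_apply, smul_eq_mul] at h0 h1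
      cases p using Fin.cases with
      | zero => simp [extendCol, h0]
      | succ p =>
        have := congrFun hv p
        simp only [Fin.tail, Pi.smul_apply, col_apply, smul_eq_mul] at this
        simp [extendCol, this, h1, mul_assoc]

theorem exists_isUnit_det_eq_smul_col {m : ℕ}
    (v : Fin (m + 1) → R) (i : Fin (m + 1)) :
    ∃ (g : R) (P : Matrix (Fin (m + 1)) (Fin (m + 1)) R), IsUnit P.det ∧ v = g • P.col i := by
  obtain ⟨g, P, hP, hv⟩ := exists_isUnit_det_eq_smul_col_zero v
  refine ⟨g, P.submatrix id (Equiv.swap 0 i), ?_, by simpa [col_apply'] using hv⟩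
  rw [det_permute']
  rcases Int.units_eq_one_or (Equiv.Perm.sign (Equiv.swap 0 i)) with h | h <;> simp [h, hP]

end IsBezout

namespace Matrix

variable {R : Type*} [CommRing R]

section Reduction

variable {k : ℕ}

theorem blockDiagOne_mul_one_updateRow {A : Matrix (Fin (k + 1)) (Fin (k + 1)) R}
    (hA : A.col (Fin.last k) = 0) :
    blockDiagOne (A.submatrix Fin.castSucc Fin.castSucc) *
      (1 : Matrix _ _ R).updateRow (Fin.last k) (A (Fin.last k)) = A := by
  have hA (i) : A i (Fin.last k) = 0 := congrFun hA i
  ext i j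
  induction i using Fin.lastCases <;> induction j using Fin.lastCases <;>
    simp [mul_apply, Fin.sum_univ_castSucc, one_apply, hA]

theorem mem_idempotentProducts_of_col_last_eq_zero {A : Matrix (Fin (k + 1)) (Fin (k + 1)) R}
    (hA : A.col (Fin.last k) = 0)
    (hB : A.submatrix Fin.castSucc Fin.castSucc ∈ idempotentProducts _) :
    A ∈ idempotentProducts _ := by
  rw [← blockDiagOne_mul_one_updateRow hA]
  exact mul_mem (idempotentProducts.map_mem blockDiagOneHom hB)
    (idempotentProducts.idempotent_mem (isIdempotentElem_one_updateRow (congrFun hA _)))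

theorem det_submatrix_castSucc_eq_zero [IsDomain R] {A : Matrix (Fin (k + 1)) (Fin (k + 1)) R}
    {w : Fin (k + 1) → R} (hw : w ≠ 0) (hwA : w ᵥ* A = 0) (hw_last : w (Fin.last k) = 0) :
    (A.submatrix Fin.castSucc Fin.castSucc).det = 0 := by
  refine exists_vecMul_eq_zero_iff.mp ⟨w ∘ Fin.castSucc, fun h => hw ?_, funext fun j => ?_⟩
  · ext i
    induction i using Fin.lastCases
    · exact hw_last
    · exact congrFun h _
  · simpa [vecMul, dotProduct, Fin.sum_univ_castSucc, hw_last] using congrFun hwA j.castSucc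

theorem mem_idempotentProducts_of_vecMul_eq_zero [IsDomain R]
    (IH : ∀ B : Matrix (Fin (k + 1)) (Fin (k + 1)) R, B.det = 0 → B ∈ idempotentProducts _)
    {A : Matrix (Fin (k + 2)) (Fin (k + 2)) R} (hA : A.col (Fin.last (k + 1)) = 0)
    {w : Fin (k + 2) → R} (hw : w ≠ 0) (hwA : w ᵥ* A = 0) {j : Fin (k + 2)}
    (hj : j ≠ Fin.last (k + 1)) (hwj : w j = 0) :
    A ∈ idempotentProducts _ := by
  set σ := Equiv.swap j (Fin.last (k + 1))
  have hσσ : ⇑σ ∘ ⇑σ = id := funext (Equiv.swap_apply_self _ _)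
  refine mem_idempotentProducts_of_submatrix_swap hj hA
    (mem_idempotentProducts_of_col_last_eq_zero ?_ (IH _ ?_))
  · ext i
    simpa using congrFun hA (σ i)
  · refine det_submatrix_castSucc_eq_zero (w := w ∘ σ) ?_ ?_ (by simpa [σ] using hwj)
    · exact fun h => hw (by simpa [Function.comp_assoc, hσσ] using congrArg (· ∘ σ) h)
    · rw [submatrix_vecMul_equiv, Equiv.symm_swap, Function.comp_assoc, hσσ]
      simp [hwA]

theorem exists_isConj_col_last_eq_zero [IsDomain R] [IsBezout R]
    {A : Matrix (Fin (k + 1)) (Fin (k + 1)) R} (hA : A.det = 0) :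
    ∃ B, IsConj A B ∧ B.col (Fin.last k) = 0 := by
  obtain ⟨v, hv, hAv⟩ := exists_mulVec_eq_zero_iff.mpr hA
  obtain ⟨g, P, hP, rfl⟩ := IsBezout.exists_isUnit_det_eq_smul_col v (Fin.last k)
  have hAP : A *ᵥ P.col (Fin.last k) = 0 := by
    rw [mulVec_smul, smul_eq_zero] at hAv
    exact hAv.resolve_left fun hg => hv (by simp [hg])
  refine ⟨_, isConj_mul_mul_of_mul_eq_one (nonsing_inv_mul P hP) (mul_nonsing_inv P hP) A, ?_⟩
  rw [← mulVec_single_one, ← mulVec_mulVec, ← mulVec_mulVec, mulVec_single_one, hAP,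
    mulVec_zero]

theorem exists_isConj_vecMul_eq_zero [IsDomain R] [IsBezout R]
    {A : Matrix (Fin (k + 3)) (Fin (k + 3)) R} (hA : A.col (Fin.last (k + 2)) = 0)
    (hA0 : A.det = 0) :
    ∃ (B : Matrix (Fin (k + 3)) (Fin (k + 3)) R) (w : Fin (k + 3) → R), IsConj A B ∧
      B.col (Fin.last (k + 2)) = 0 ∧ w ≠ 0 ∧ w ᵥ* B = 0 ∧ w 0 = 0 := by
  obtain ⟨w, hw, hwA⟩ := exists_vecMul_eq_zero_iff.mpr hA0
  obtain ⟨g, P, hP, hwP⟩ :=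
    IsBezout.exists_isUnit_det_eq_smul_col (w ∘ Fin.castSucc) (Fin.last (k + 1))
  set Q := Pᵀ
  have hQ : IsUnit Q.det := by rwa [det_transpose]
  have hQQ : blockDiagOne Q * blockDiagOne Q⁻¹ = 1 := by
    rw [blockDiagOne_mul, mul_nonsing_inv Q hQ, blockDiagOne_one]
  have hQQ' : blockDiagOne Q⁻¹ * blockDiagOne Q = 1 := by
    rw [blockDiagOne_mul, nonsing_inv_mul Q hQ, blockDiagOne_one]
  refine ⟨_, w ᵥ* blockDiagOne Q⁻¹, isConj_mul_mul_of_mul_eq_one hQQ hQQ' A,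
    ?_, ?_, ?_, ?_⟩
  · rw [← mulVec_single_one, ← mulVec_mulVec, ← mulVec_mulVec, mulVec_single_one,
      col_blockDiagOne_last, mulVec_single_one, hA, mulVec_zero]
  · intro h
    apply hw
    simpa [vecMul_vecMul, hQQ'] using congrArg (· ᵥ* blockDiagOne Q) h
  · rw [vecMul_vecMul, ← mul_assoc, ← mul_assoc, hQQ', one_mul, ← vecMul_vecMul, hwA,
      zero_vecMul]
  · rw [← Fin.castSucc_zero, vecMul_blockDiagOne_castSucc, hwP, smul_vecMul,
      show P.col (Fin.last (k + 1)) = Q (Fin.last (k + 1)) from rfl, ← mul_apply_eq_vecMul,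
      mul_nonsing_inv Q hQ]
    simp

theorem mem_idempotentProducts_of_det_eq_zero_succ [IsDomain R] [IsBezout R]
    (IH : ∀ B : Matrix (Fin (k + 2)) (Fin (k + 2)) R, B.det = 0 → B ∈ idempotentProducts _)
    {A : Matrix (Fin (k + 3)) (Fin (k + 3)) R} (hA : A.det = 0) : A ∈ idempotentProducts _ := by
  obtain ⟨A₁, hAA₁, hA₁⟩ := exists_isConj_col_last_eq_zero hA
  have hA₁0 : A₁.det = 0 := by
    simpa [hA] using (isConj_iff_eq.mp (detMonoidHom.map_isConj hAA₁)).symm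
  obtain ⟨A₂, w, hA₁A₂, hA₂, hw, hwA₂, hw0⟩ :=
    exists_isConj_vecMul_eq_zero hA₁ hA₁0
  exact idempotentProducts.mem_of_isConj (hAA₁.trans hA₁A₂).symm
    (mem_idempotentProducts_of_vecMul_eq_zero IH hA₂ hw hwA₂ Fin.last_pos.ne hw0)

end Reduction

theorem mem_idempotentProducts_of_det_eq_zero [IsDomain R] [IsBezout R]
    (h2 : ∀ A : Matrix (Fin 2) (Fin 2) R, A.det = 0 → A ∈ idempotentProducts _) :
    ∀ {n : ℕ} (A : Matrix (Fin (n + 1)) (Fin (n + 1)) R),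
      A.det = 0 → A ∈ idempotentProducts _
  | 0, A, hA => by
    have : A = 0 := by
      ext i j
      simpa [Fin.fin_one_eq_zero i, Fin.fin_one_eq_zero j] using hA
    exact this ▸ idempotentProducts.idempotent_mem IsIdempotentElem.zero
  | 1, A, hA => h2 A hA
  | _ + 2, _, hA =>
    mem_idempotentProducts_of_det_eq_zero_succ (mem_idempotentProducts_of_det_eq_zero h2) hA

end Matrix

theorem IP_of_bezout_IP2_GE2_general
    (R : Type*) [CommRing R] [IsDomain R] [IsBezout R]
    (hIP2 : ∀ A : Matrix (Fin 2) (Fin 2) R, A.det = 0 →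
      ∃ l : List (Matrix (Fin 2) (Fin 2) R), (∀ E ∈ l, E * E = E) ∧ A = l.prod) :
    ∀ (n : ℕ) (A : Matrix (Fin (n + 1)) (Fin (n + 1)) R), A.det = 0 →
      ∃ l : List (Matrix (Fin (n + 1)) (Fin (n + 1)) R),
        (∀ E ∈ l, E * E = E) ∧ A = l.prod := by
  intro n A hA
  simp only [← idempotentProducts.mem_iff_exists_list] at hIP2 ⊢
  exact Matrix.mem_idempotentProducts_of_det_eq_zero hIP2 A hA

/-- A commutative Bézout domain with the IP₂ and GE₂ properties has the IP
property: every singular `n × n` matrix is a product of idempotent matrices. -/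
theorem IP_of_bezout_IP2_GE2
    (R : Type*) [CommRing R] [IsDomain R] [IsBezout R]
    (hIP2 : ∀ A : Matrix (Fin 2) (Fin 2) R, A.det = 0 →
      ∃ l : List (Matrix (Fin 2) (Fin 2) R), (∀ E ∈ l, E * E = E) ∧ A = l.prod)
    (hGE2 : ∀ M : (Matrix (Fin 2) (Fin 2) R)ˣ,
      M ∈ Subgroup.closure
        {N : (Matrix (Fin 2) (Fin 2) R)ˣ |
          (∃ (i j : Fin 2) (c : R), i ≠ j ∧
            N.val = 1 + Matrix.single i j c) ∨
          (∃ u v : Rˣ,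
            N.val = Matrix.diagonal ![(u : R), (v : R)])}) :
    ∀ (n : ℕ) (A : Matrix (Fin (n + 1)) (Fin (n + 1)) R), A.det = 0 →
      ∃ l : List (Matrix (Fin (n + 1)) (Fin (n + 1)) R),
        (∀ E ∈ l, E * E = E) ∧ A = l.prod :=
  IP_of_bezout_IP2_GE2_general R hIP2
end
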